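/- Let X be a compact topological space, let (Y, d) be a metric space, let n ≥ 1, let F : X → 2^Y be a continuous n-valued multifunction, and let h : Y → Y be a continuous map such that d(h(y), y) < γ(F)/2 for all y in the range of F, where γ(F) = inf_{x ∈ X} min{ d(y, y') : y, y' ∈ F(x), y ≠ y' }. Then the multifunction x ↦ h(F(x)) = { h(y) : y ∈ F(x) } is n-valued, i.e. h(F(x)) has exactly n points for every x ∈ X. -/
import Mathlib


open TopologicalSpace

/-- If `F` is a continuous `n`-valued multifunction on a compact space and `h` is a continuous
map moving every point of the range of `F` by less than half the gap
`γ(F) = inf { d(y, y') : y ≠ y' both in some F x }`, then the composed multifunction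
`x ↦ h '' (F x)` is again `n`-valued. -/
theorem image_of_nValued_is_nValued
    {X : Type*} [TopologicalSpace X] [CompactSpace X]
    {Y : Type*} [MetricSpace Y]
    (n : ℕ) (hn : 1 ≤ n)
    (F : X → NonemptyCompacts Y) (hFcont : Continuous F)
    (hFn : ∀ x, (F x : Set Y).ncard = n)
    (h : Y → Y) (hcont : Continuous h)
    (hnear : ∀ y : Y, (∃ x : X, y ∈ (F x : Set Y)) →
      dist (h y) y <
        (sInf {r : ℝ | ∃ x : X, ∃ y₁ ∈ (F x : Set Y), ∃ y₂ ∈ (F x : Set Y),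
          y₁ ≠ y₂ ∧ r = dist y₁ y₂}) / 2) :
    ∀ x : X, (h '' (F x : Set Y)).ncard = n := by
  intro x
  set S := {r : ℝ | ∃ x : X, ∃ y₁ ∈ (F x : Set Y), ∃ y₂ ∈ (F x : Set Y),
      y₁ ≠ y₂ ∧ r = dist y₁ y₂} with hS
  have hbdd : BddBelow S := by
    refine ⟨0, ?_⟩
    rintro r ⟨x, y₁, -, y₂, -, -, rfl⟩
    exact dist_nonneg
  have hInj : Set.InjOn h (F x : Set Y) := by
    intro y₁ h₁ y₂ h₂ heq
    by_contra hne
    have hmem : dist y₁ y₂ ∈ S := ⟨x, y₁, h₁, y₂, h₂, hne, rfl⟩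
    have hle : sInf S ≤ dist y₁ y₂ := csInf_le hbdd hmem
    have hn1 := hnear y₁ ⟨x, h₁⟩
    have hn2 := hnear y₂ ⟨x, h₂⟩
    have htri : dist y₁ y₂ ≤ dist (h y₁) y₁ + dist (h y₂) y₂ := by
      calc dist y₁ y₂ ≤ dist y₁ (h y₁) + dist (h y₁) y₂ := dist_triangle _ _ _
        _ = dist (h y₁) y₁ + dist (h y₂) y₂ := by rw [dist_comm y₁, heq]
    linarith
  rw [Set.ncard_image_of_injOn hInj]
  exact hFn x
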